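/- Let P be a field and H a commutative P-algebra. Then LSC(H) = qVar(H) — i.e., for every commutative P-algebra B (in a universe containing that of P and H), B satisfies every finitary quasiidentity holding in H if and only if every finitely generated P-subalgebra of B admits an injective P-algebra homomorphism into some power (J → H) of H — if and only if H is logically noetherian. -/

import Mathlib

open MvPolynomial

universe u v

/-- The `H`-closure `T''_H` of a set `T` of polynomials. -/
def hClosure (P : Type u) [Field P] (H : Type v) [CommRing H] [Algebra P H]
    (n : ℕ) (T : Set (MvPolynomial (Fin n) P)) : Set (MvPolynomial (Fin n) P) :=
  {f | ∀ μ : Fin n → H, (∀ g ∈ T, aeval μ g = 0) → aeval μ f = 0}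

/-- `H` is logically noetherian: membership in any closure `T''_H` is witnessed
by a finite subset of `T`. -/
def LogicallyNoetherian (P : Type u) [Field P]
    (H : Type v) [CommRing H] [Algebra P H] : Prop :=
  ∀ (n : ℕ) (T : Set (MvPolynomial (Fin n) P)) (f : MvPolynomial (Fin n) P),
    f ∈ hClosure P H n T →
    ∃ T₀ : Finset (MvPolynomial (Fin n) P), ↑T₀ ⊆ T ∧ f ∈ hClosure P H n ↑T₀

/-!
Quasi-identities of `H`, even the infinitary ones `T ⟹ f` with `f ∈ T''_H`, pass to powers of
`H`, to subalgebras, and from the finitely generated subalgebras to the whole algebra; hence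
`LSC(H) ⊆ qVar(H)` always. A finitely generated algebra `P[X]/K` embeds into a power of `H` as soon
as `K''_H ⊆ K`. If `H` is logically noetherian and `P[X]/K ∈ qVar(H)`, then `f ∈ K''_H` already
follows from finitely many elements of `K`, a finitary quasi-identity that holds at the generic
point of `P[X]/K`, so `f ∈ K`.

Conversely, given `T` and `f ∈ T''_H`, let `I` be the ideal of polynomials entailed over `H` by
finite parts of `T`. Every finitary quasi-identity of `H` holds in `P[X]/I`, so if this algebra is
in `LSC(H)` it also satisfies `T ⟹ f`; at the generic point this says `f ∈ I`.
-/

open Function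

/-- Membership `B ∈ qVar(H)` in the quasivariety generated by `H`. -/
def MemQVar (P : Type u) [Field P] (H : Type v) [CommRing H] [Algebra P H]
    (B : Type*) [CommRing B] [Algebra P B] : Prop :=
  ∀ (n : ℕ) (T : Finset (MvPolynomial (Fin n) P)), hClosure P H n T ⊆ hClosure P B n T

/-- Membership `B ∈ LSC(H)`, with powers of `H` indexed by types in `Type w`. -/
def MemLSC.{w, u₁, v₁, w₁} (P : Type u₁) [Field P] (H : Type v₁) [CommRing H] [Algebra P H]
    (B : Type w₁) [CommRing B] [Algebra P B] : Prop :=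
  ∀ S : Subalgebra P B, S.FG → ∃ (J : Type w) (g : S →ₐ[P] (J → H)), Injective g

universe w w'

variable {P : Type u} [Field P] {H : Type v} [CommRing H] [Algebra P H]
  {A B : Type*} [CommRing A] [Algebra P A] [CommRing B] [Algebra P B]
  {n : ℕ} {T T' : Set (MvPolynomial (Fin n) P)}

theorem hClosure_mono (h : T ⊆ T') : hClosure P H n T ⊆ hClosure P H n T' :=
  fun _ hf μ hμ => hf μ fun g hg => hμ g (h hg)

theorem hClosure_subset_of_injective (g : A →ₐ[P] B) (hg : Injective g) :
    hClosure P B n T ⊆ hClosure P A n T := by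
  intro f hf μ hμ
  apply hg
  rw [map_zero, comp_aeval_apply]
  exact hf _ fun t ht => by rw [← comp_aeval_apply, hμ t ht, map_zero]

theorem hClosure_subset_hClosure_pi (J : Type*) : hClosure P H n T ⊆ hClosure P (J → H) n T := by
  intro f hf μ hμ
  funext j
  have hcoord (p : MvPolynomial (Fin n) P) : aeval μ p j = aeval (fun i => μ i j) p :=
    comp_aeval_apply μ (Pi.evalAlgHom P (fun _ => H) j) p
  rw [hcoord]
  exact hf _ fun t ht => by rw [← hcoord, hμ t ht, Pi.zero_apply]

theorem hClosure_subset_of_forall_fg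
    (h : ∀ S : Subalgebra P B, S.FG → hClosure P H n T ⊆ hClosure P S n T) :
    hClosure P H n T ⊆ hClosure P B n T := by
  intro f hf μ hμ
  let S := Algebra.adjoin P (Set.range μ)
  let μS : Fin n → S := fun i => ⟨μ i, Algebra.subset_adjoin (Set.mem_range_self i)⟩
  have hval (p : MvPolynomial (Fin n) P) : aeval μ p = S.val (aeval μS p) :=
    (comp_aeval_apply μS S.val p).symm
  have hS : S.FG := Subalgebra.fg_def.mpr ⟨_, Set.finite_range μ, rfl⟩
  have hμS : ∀ t ∈ T, aeval μS t = 0 := fun t ht =>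
    (map_eq_zero_iff S.val Subtype.val_injective).mp ((hval t).symm.trans (hμ t ht))
  rw [hval, h S hS hf μS hμS, map_zero]

theorem aeval_mem_hClosure {m : ℕ} {U : Set (MvPolynomial (Fin m) P)} {q : MvPolynomial (Fin m) P}
    (hq : q ∈ hClosure P H m U) (p : Fin m → MvPolynomial (Fin n) P)
    (hU : ∀ u ∈ U, aeval p u ∈ hClosure P H n T) :
    aeval p q ∈ hClosure P H n T := by
  intro ν hν
  rw [comp_aeval_apply]
  exact hq _ fun u hu => by rw [← comp_aeval_apply]; exact hU u hu ν hν

theorem MemLSC.hClosure_subset (hB : MemLSC.{w} P H B) : hClosure P H n T ⊆ hClosure P B n T :=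
  hClosure_subset_of_forall_fg fun S hS =>
    let ⟨J, g, hg⟩ := hB S hS
    (hClosure_subset_hClosure_pi J).trans (hClosure_subset_of_injective g hg)

theorem MemLSC.memQVar (hB : MemLSC.{w} P H B) : MemQVar P H B :=
  fun _ _ => hB.hClosure_subset

theorem MemQVar.of_injective (g : A →ₐ[P] B) (hg : Injective g) (hB : MemQVar P H B) :
    MemQVar P H A :=
  fun n T => (hB n T).trans (hClosure_subset_of_injective g hg)

theorem MemQVar.hClosure_ker_subset (hN : LogicallyNoetherian P H) (hA : MemQVar P H A)
    (φ : MvPolynomial (Fin n) P →ₐ[P] A) :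
    hClosure P H n (RingHom.ker φ) ⊆ RingHom.ker φ := by
  intro f hf
  obtain ⟨T₀, hT₀, hf₀⟩ := hN n _ f hf
  rw [SetLike.mem_coe, RingHom.mem_ker, aeval_unique φ]
  exact hA n T₀ hf₀ _ fun g hg => by rw [← aeval_unique φ]; exact hT₀ hg

theorem exists_injective_quotient_algHom_pi (I : Ideal (MvPolynomial (Fin n) P))
    (hI : hClosure P H n I ⊆ I) :
    ∃ (J : Type max v w) (g : (MvPolynomial (Fin n) P ⧸ I) →ₐ[P] (J → H)), Injective g := by
  let J := ULift.{w} {μ : Fin n → H // ∀ g ∈ I, aeval μ g = 0}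
  let ψ : MvPolynomial (Fin n) P →ₐ[P] (J → H) := AlgHom.pi fun j => aeval j.down.1
  have hker : RingHom.ker ψ = I :=
    le_antisymm (fun p hp => hI fun μ hμ => congrFun hp (ULift.up ⟨μ, hμ⟩))
      fun p hp => funext fun j => j.down.2 p hp
  exact ⟨J, (Ideal.kerLiftAlg ψ).comp (Ideal.quotientEquivAlgOfEq P hker.symm).toAlgHom,
    (Ideal.kerLiftAlg_injective ψ).comp (AlgEquiv.injective _)⟩

theorem MemQVar.memLSC (hN : LogicallyNoetherian P H) (hB : MemQVar P H B) :
    MemLSC.{max v w} P H B := by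
  intro S hS
  obtain ⟨n, φ, hφ⟩ :=
    Algebra.FiniteType.iff_quotient_mvPolynomial''.mp (S.fg_iff_finiteType.mp hS)
  have hS' : MemQVar P H S := hB.of_injective S.val Subtype.val_injective
  obtain ⟨J, g, hg⟩ :=
    exists_injective_quotient_algHom_pi.{u, v, w} (RingHom.ker φ) (hS'.hClosure_ker_subset hN φ)
  exact ⟨J, g.comp (Ideal.quotientKerAlgEquivOfSurjective hφ).symm.toAlgHom,
    hg.comp (AlgEquiv.injective _)⟩

variable (P H) in
def finiteConsequenceIdeal (n : ℕ) (T : Set (MvPolynomial (Fin n) P)) :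
    Ideal (MvPolynomial (Fin n) P) where
  carrier := {f | ∃ T₀ : Finset (MvPolynomial (Fin n) P), ↑T₀ ⊆ T ∧ f ∈ hClosure P H n T₀}
  zero_mem' := ⟨∅, by simp, fun μ _ => map_zero _⟩
  add_mem' := by
    classical
    rintro a b ⟨Ta, hTa, ha⟩ ⟨Tb, hTb, hb⟩
    refine ⟨Ta ∪ Tb, by simp [hTa, hTb], fun μ hμ => ?_⟩
    rw [map_add, hClosure_mono (by simp) ha μ hμ, hClosure_mono (by simp) hb μ hμ, add_zero]
  smul_mem' := by
    rintro c f ⟨T₀, hT₀, hf⟩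
    exact ⟨T₀, hT₀, fun μ hμ => by rw [smul_eq_mul, map_mul, hf μ hμ, mul_zero]⟩

theorem memQVar_quotient_finiteConsequenceIdeal :
    MemQVar P H (MvPolynomial (Fin n) P ⧸ finiteConsequenceIdeal P H n T) := by
  classical
  intro m U q hq μ hμ
  let I := finiteConsequenceIdeal P H n T
  obtain ⟨p, rfl⟩ : ∃ p : Fin m → MvPolynomial (Fin n) P,
      (fun i => Ideal.Quotient.mkₐ P I (p i)) = μ :=
    ⟨_, funext fun i => surjInv_eq (Ideal.Quotient.mkₐ_surjective P I) (μ i)⟩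
  have hmk (r : MvPolynomial (Fin m) P) :
      aeval (fun i => Ideal.Quotient.mkₐ P I (p i)) r = 0 ↔ aeval p r ∈ I := by
    rw [← comp_aeval_apply, Ideal.Quotient.mkₐ_eq_mk, Ideal.Quotient.eq_zero_iff_mem]
  choose! Tu hTu hpTu using fun u hu => (hmk u).mp (hμ u hu)
  refine (hmk q).mpr ⟨U.biUnion Tu, by simpa using hTu, aeval_mem_hClosure hq p fun u hu => ?_⟩
  exact hClosure_mono (Finset.coe_subset.mpr (Finset.subset_biUnion_of_mem Tu hu)) (hpTu u hu)

theorem logicallyNoetherian_of_memQVar_imp_memLSC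
    (h : ∀ (B : Type max u w) [CommRing B] [Algebra P B], MemQVar P H B → MemLSC.{w'} P H B) :
    LogicallyNoetherian P H := by
  intro n T f hf
  let I := finiteConsequenceIdeal P H n T
  let e : ULift.{w} (MvPolynomial (Fin n) P ⧸ I) ≃ₐ[P] _ := ULift.algEquiv
  have hLSC := h _ (memQVar_quotient_finiteConsequenceIdeal.of_injective e.toAlgHom e.injective)
  have hfI : f ∈ hClosure P (MvPolynomial (Fin n) P ⧸ I) n T :=
    hClosure_subset_of_injective e.symm.toAlgHom e.symm.injective (hLSC.hClosure_subset hf)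
  have hmk (p : MvPolynomial (Fin n) P) :
      aeval (fun i => Ideal.Quotient.mkₐ P I (X i)) p = Ideal.Quotient.mk I p := by
    rw [← comp_aeval_apply, aeval_X_left_apply, Ideal.Quotient.mkₐ_eq_mk]
  have hf0 := hfI _ fun t ht => by
    rw [hmk, Ideal.Quotient.eq_zero_iff_mem]
    exact ⟨{t}, by simpa using ht, fun μ hμ => hμ t (by simp)⟩
  rwa [hmk, Ideal.Quotient.eq_zero_iff_mem] at hf0

/-- `LSC(H) = qVar(H)` holds iff `H` is logically noetherian. -/
theorem LSC_eq_qVar_iff_logicallyNoetherian (P : Type u) [Field P]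
    (H : Type v) [CommRing H] [Algebra P H] :
    (∀ (B : Type (max u v)) [CommRing B] [Algebra P B],
        ((∀ (n : ℕ) (T : Finset (MvPolynomial (Fin n) P))
            (f : MvPolynomial (Fin n) P),
            (∀ μ : Fin n → H, (∀ g ∈ T, aeval μ g = 0) → aeval μ f = 0) →
            ∀ μ : Fin n → B, (∀ g ∈ T, aeval μ g = 0) → aeval μ f = 0)
          ↔
        (∀ S : Subalgebra P B, S.FG →
            ∃ (J : Type (max u v)) (g : S →ₐ[P] (J → H)),
              Function.Injective g)))
      ↔
    LogicallyNoetherian P H :=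
  ⟨fun h => logicallyNoetherian_of_memQVar_imp_memLSC fun B _ _ => (h B).mp,
    fun hN _ _ _ => ⟨MemQVar.memLSC.{u, v, u} hN, MemLSC.memQVar⟩⟩
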